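/- Let g be a real quadratic form on ℝ^m and let p be a positive definite quadratic form on ℝ^m. Then there exists ε₀ > 0 such that for every ε with 0 < ε < ε₀: i⁻(g − εp) = i⁻(g) + dim ker g. -/

import Mathlib

/-! For small `ε > 0`, a maximal positive subspace `P` of `g` stays positive for `g - εp`
(positivity on the compact unit sphere of `P` is an open condition), while `g - εp` is negative
on `N ⊕ ker g` for a maximal negative subspace `N` of `g`. A subspace on which `g - εp` is
negative meets `P` trivially, so `i⁻(g - εp) ≤ m - i⁺(g)`, and `m ≤ i⁺(g) + i⁻(g) + dim ker g`
by diagonalising `g` in an orthogonal basis. -/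

open CategoryTheory

noncomputable section

/-- The singular chain complex functor with `ℤ/2` coefficients: compose the singular
simplicial set functor with the free `ℤ/2`-module functor and the alternating face map
complex. -/
def singularChainFunctor : TopCat ⥤ ChainComplex (ModuleCat (ZMod 2)) ℕ :=
  TopCat.toSSet ⋙ ((SimplicialObject.whiskering _ _).obj (ModuleCat.free (ZMod 2))) ⋙
    AlgebraicTopology.alternatingFaceMapComplex _

/-- Singular homology of a topological space with `ℤ/2` coefficients. -/
def homologyZ2 (X : Type) [TopologicalSpace X] (k : ℕ) : ModuleCat (ZMod 2) :=
  (singularChainFunctor.obj (TopCat.of X)).homology k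

/-- `ℤ/2` Betti numbers: `b_k(X) = dim_{ℤ/2} H_k(X; ℤ/2)`. -/
def bettiZ2 (X : Type) [TopologicalSpace X] (k : ℕ) : ℕ :=
  Module.finrank (ZMod 2) (homologyZ2 X k)

/-- Reduced `ℤ/2` Betti numbers: `b̃_k = b_k` for `k ≥ 1` and `b̃_0 = b_0 - 1`
(for nonempty spaces). -/
def reducedBettiZ2 (X : Type) [TopologicalSpace X] (k : ℕ) : ℕ :=
  if k = 0 then bettiZ2 X 0 - 1 else bettiZ2 X k

/-- The singular cochain complex functor with `ℤ/2` coefficients, obtained by dualizing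
the singular chain complex. -/
def singularCochainFunctor : TopCatᵒᵖ ⥤ CochainComplex (ModuleCat (ZMod 2)) ℕ :=
  singularChainFunctor.op ⋙ HomologicalComplex.opFunctor _ _ ⋙
    ((linearYoneda (ZMod 2) (ModuleCat (ZMod 2))).obj
      (ModuleCat.of (ZMod 2) (ZMod 2))).mapHomologicalComplex _

/-- Singular cohomology of a topological space with `ℤ/2` coefficients. -/
def cohomologyZ2 (X : Type) [TopologicalSpace X] (k : ℕ) : ModuleCat (ZMod 2) :=
  (singularCochainFunctor.obj (Opposite.op (TopCat.of X))).homology k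

/-- The map induced on `ℤ/2` singular cohomology by a continuous map. -/
def cohomologyMap {X Y : Type} [TopologicalSpace X] [TopologicalSpace Y]
    (f : C(X, Y)) (k : ℕ) : cohomologyZ2 Y k ⟶ cohomologyZ2 X k :=
  HomologicalComplex.homologyMap
    (singularCochainFunctor.map (show TopCat.of X ⟶ TopCat.of Y from TopCat.ofHom f).op) k

/-- Relative singular homology with `ℤ/2` coefficients of a pair of subsets `T ⊆ S`:
the homology of the quotient (cokernel) of the singular chain complexes. -/
def relHomologyZ2 {W : Type} [TopologicalSpace W] (S T : Set W) (h : T ⊆ S) (k : ℕ) :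
    ModuleCat (ZMod 2) :=
  (Limits.cokernel (singularChainFunctor.map
    (TopCat.ofHom ⟨Set.inclusion h, continuous_inclusion h⟩ : TopCat.of T ⟶ TopCat.of S))).homology k

/-- Relative `ℤ/2` Betti numbers of a pair `T ⊆ S`. -/
def relBettiZ2 {W : Type} [TopologicalSpace W] (S T : Set W) (h : T ⊆ S) (k : ℕ) : ℕ :=
  Module.finrank (ZMod 2) (relHomologyZ2 S T h k)

/-- The quotient topology on the real projective space of a topological vector space. -/
instance projSpaceTop (V : Type*) [AddCommGroup V] [Module ℝ V] [TopologicalSpace V] :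
    TopologicalSpace (Projectivization ℝ V) :=
  inferInstanceAs (TopologicalSpace (Quotient (projectivizationSetoid ℝ V)))

/-- The positive inertia index `i⁺` of a real quadratic form: the maximal dimension of a
subspace on which the form is positive definite. -/
def posInertia {V : Type*} [AddCommGroup V] [Module ℝ V] (g : QuadraticForm ℝ V) : ℕ :=
  sSup {d | ∃ W : Submodule ℝ V, Module.finrank ℝ ↥W = d ∧ ∀ x ∈ W, x ≠ 0 → 0 < g x}

/-- The negative inertia index `i⁻` of a real quadratic form: `i⁻(g) = i⁺(-g)`. -/
def negInertia {V : Type*} [AddCommGroup V] [Module ℝ V] (g : QuadraticForm ℝ V) : ℕ :=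
  posInertia (-g)

/-- The kernel (radical) of a real quadratic form: the kernel of the associated
symmetric bilinear form. -/
def qfKer {V : Type*} [AddCommGroup V] [Module ℝ V] (g : QuadraticForm ℝ V) :
    Submodule ℝ V :=
  LinearMap.ker (QuadraticMap.associated (R := ℝ) g)

/-- The intersection of the two quadrics `{q₀ = 0}` and `{q₁ = 0}` in the real projective
space `ℝP^n`. -/
def projQuadricSet {n : ℕ} (q₀ q₁ : QuadraticForm ℝ (EuclideanSpace ℝ (Fin (n + 1)))) :
    Set (Projectivization ℝ (EuclideanSpace ℝ (Fin (n + 1)))) :=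
  {p | ∃ x : EuclideanSpace ℝ (Fin (n + 1)), ∃ hx : x ≠ 0,
    p = Projectivization.mk ℝ x hx ∧ q₀ x = 0 ∧ q₁ x = 0}

/-- Nonsingularity of the intersection of two quadrics: at every nonzero common zero the
differentials of the two forms are linearly independent, i.e. `0` is a regular value of
`x ↦ (q₀ x, q₁ x)` on `ℝ^{n+1} ∖ {0}`. -/
def NonsingularPair {n : ℕ} (q₀ q₁ : QuadraticForm ℝ (EuclideanSpace ℝ (Fin (n + 1)))) :
    Prop :=
  ∀ x : EuclideanSpace ℝ (Fin (n + 1)), x ≠ 0 → q₀ x = 0 → q₁ x = 0 →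
    LinearIndependent ℝ ![fderiv ℝ (fun y => q₀ y) x, fderiv ℝ (fun y => q₁ y) x]

open Module Filter Topology

section Inertia

variable {V : Type*} [AddCommGroup V] [Module ℝ V] [FiniteDimensional ℝ V]

theorem bddAbove_finrank_posDef_submodules (q : QuadraticForm ℝ V) :
    BddAbove {d | ∃ W : Submodule ℝ V, finrank ℝ W = d ∧ ∀ x ∈ W, x ≠ 0 → 0 < q x} :=
  ⟨finrank ℝ V, by rintro _ ⟨U, rfl, -⟩; exact U.finrank_le⟩

theorem le_posInertia {q : QuadraticForm ℝ V} {W : Submodule ℝ V}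
    (hW : ∀ x ∈ W, x ≠ 0 → 0 < q x) : finrank ℝ W ≤ posInertia q :=
  le_csSup (bddAbove_finrank_posDef_submodules q) ⟨W, rfl, hW⟩

theorem exists_finrank_eq_posInertia (q : QuadraticForm ℝ V) :
    ∃ W : Submodule ℝ V, finrank ℝ W = posInertia q ∧ ∀ x ∈ W, x ≠ 0 → 0 < q x :=
  Nat.sSup_mem (by exact ⟨0, ⊥, finrank_bot ℝ V, by simp⟩)
    (bddAbove_finrank_posDef_submodules q)

theorem le_negInertia {q : QuadraticForm ℝ V} {W : Submodule ℝ V}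
    (hW : ∀ x ∈ W, x ≠ 0 → q x < 0) : finrank ℝ W ≤ negInertia q :=
  le_posInertia fun x hx hx0 => neg_pos.mpr (hW x hx hx0)

theorem exists_finrank_eq_negInertia (q : QuadraticForm ℝ V) :
    ∃ W : Submodule ℝ V, finrank ℝ W = negInertia q ∧ ∀ x ∈ W, x ≠ 0 → q x < 0 := by
  obtain ⟨W, hW, hpos⟩ := exists_finrank_eq_posInertia (-q)
  exact ⟨W, hW, fun x hx hx0 => neg_pos.mp (hpos x hx hx0)⟩

theorem finrank_add_finrank_le_of_pos_of_neg {q : QuadraticForm ℝ V} {W U : Submodule ℝ V}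
    (hW : ∀ x ∈ W, x ≠ 0 → 0 < q x) (hU : ∀ x ∈ U, x ≠ 0 → q x < 0) :
    finrank ℝ W + finrank ℝ U ≤ finrank ℝ V := by
  refine Submodule.finrank_add_finrank_le_of_disjoint (Submodule.disjoint_def.mpr ?_)
  intro x hxW hxU
  by_contra hx0
  exact (hW x hxW hx0).not_gt (hU x hxU hx0)

end Inertia

section Kernel

variable {V : Type*} [AddCommGroup V] [Module ℝ V]

theorem apply_add_of_mem_qfKer (q : QuadraticForm ℝ V) {z : V} (hz : z ∈ qfKer q) (y : V) :
    q (y + z) = q y := by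
  have hB : QuadraticMap.associated q z = 0 := hz
  have hyz : QuadraticMap.associated q y z = 0 := by
    rw [QuadraticMap.associated_isSymm ℝ q y z, hB, LinearMap.zero_apply]
  rw [← QuadraticMap.associated_eq_self_apply ℝ q,
    ← QuadraticMap.associated_eq_self_apply ℝ q y]
  simp [hB, hyz]

theorem apply_eq_zero_of_mem_qfKer (q : QuadraticForm ℝ V) {z : V} (hz : z ∈ qfKer q) :
    q z = 0 := by
  simpa using apply_add_of_mem_qfKer q hz 0

variable [FiniteDimensional ℝ V]

theorem negInertia_add_finrank_qfKer_le_negInertia_sub (g : QuadraticForm ℝ V)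
    {p : QuadraticForm ℝ V} (hp : ∀ x, x ≠ 0 → 0 < p x) :
    negInertia g + finrank ℝ (qfKer g) ≤ negInertia (g - p) := by
  obtain ⟨N, hNdim, hN⟩ := exists_finrank_eq_negInertia g
  have hdisj : Disjoint N (qfKer g) := by
    refine Submodule.disjoint_def.mpr fun x hxN hxK => ?_
    by_contra hx0
    exact (hN x hxN hx0).ne (apply_eq_zero_of_mem_qfKer g hxK)
  have hnonpos : ∀ y ∈ N, g y ≤ 0 := fun y hy => by
    rcases eq_or_ne y 0 with rfl | hy0
    · simp
    · exact (hN y hy hy0).le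
  have hneg : ∀ x ∈ N ⊔ qfKer g, x ≠ 0 → (g - p) x < 0 := by
    intro x hx hx0
    obtain ⟨y, hy, z, hz, rfl⟩ := Submodule.mem_sup.mp hx
    rw [sub_apply, apply_add_of_mem_qfKer g hz]
    linarith [hnonpos y hy, hp _ hx0]
  calc negInertia g + finrank ℝ (qfKer g) = finrank ℝ ↥(N ⊔ qfKer g) := by
        rw [← hNdim, ← Submodule.finrank_sup_add_finrank_inf_eq, hdisj.eq_bot, finrank_bot,
          add_zero]
    _ ≤ negInertia (g - p) := le_negInertia hneg

end Kernel

theorem Module.Basis.finrank_span_image {K V ι : Type*} [DivisionRing K] [AddCommGroup V]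
    [Module K V] (b : Basis ι K V) (s : Finset ι) :
    finrank K (Submodule.span K (b '' s)) = s.card := by
  rw [Set.image_eq_range]
  exact (finrank_span_eq_card (b.linearIndependent.comp _ Subtype.val_injective)).trans (by simp)

theorem QuadraticMap.apply_eq_sum_of_isOrthoᵢ {R M ι : Type*} [CommRing R] [Invertible (2 : R)]
    [AddCommGroup M] [Module R M] [Fintype ι] (q : QuadraticForm R M) {v : Basis ι R M}
    (hv : (associated (R := R) q).IsOrthoᵢ v) (x : M) :
    q x = ∑ i, q (v i) * v.repr x i ^ 2 := by
  have h := congrArg (fun Q => Q (v.repr x)) (q.basisRepr_eq_of_iIsOrtho v hv)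
  simp only [basisRepr_apply, v.sum_repr, weightedSumSquares_apply, smul_eq_mul] at h
  rw [h]
  exact Finset.sum_congr rfl fun i _ => by ring

section OrthogonalBasis

variable {V ι : Type*} [AddCommGroup V] [Module ℝ V] {q : QuadraticForm ℝ V}
  {v : Basis ι ℝ V}

theorem pos_of_mem_span_image_of_isOrthoᵢ [Fintype ι]
    (hv : (QuadraticMap.associated q).IsOrthoᵢ v) {s : Finset ι} (hs : ∀ i ∈ s, 0 < q (v i)) {x : V}
    (hx : x ∈ Submodule.span ℝ (v '' s)) (hx0 : x ≠ 0) : 0 < q x := by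
  have hsupp : ∀ i, v.repr x i ≠ 0 → i ∈ s := fun i hi =>
    v.mem_span_image.mp hx (Finsupp.mem_support_iff.mpr hi)
  obtain ⟨i, hi⟩ : ∃ i, v.repr x i ≠ 0 := by
    by_contra! h
    exact hx0 (v.ext_elem fun i => by simp [h i])
  rw [q.apply_eq_sum_of_isOrthoᵢ hv]
  refine Finset.sum_pos' (fun j _ => ?_) ⟨i, Finset.mem_univ i, ?_⟩
  · rcases eq_or_ne (v.repr x j) 0 with hj | hj
    · simp [hj]
    · exact (mul_pos (hs j (hsupp j hj)) (sq_pos_of_ne_zero hj)).le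
  · exact mul_pos (hs i (hsupp i hi)) (sq_pos_of_ne_zero hi)

theorem mem_qfKer_of_isOrthoᵢ (hv : (QuadraticMap.associated q).IsOrthoᵢ v) {i : ι}
    (hi : q (v i) = 0) : v i ∈ qfKer q := by
  refine LinearMap.mem_ker.mpr (v.ext fun j => ?_)
  rcases eq_or_ne i j with rfl | hij
  · simpa [QuadraticMap.associated_eq_self_apply] using hi
  · exact hv hij

end OrthogonalBasis

theorem finrank_le_posInertia_add_negInertia_add_finrank_qfKer {V : Type*} [AddCommGroup V]
    [Module ℝ V] [FiniteDimensional ℝ V] (q : QuadraticForm ℝ V) :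
    finrank ℝ V ≤ posInertia q + negInertia q + finrank ℝ (qfKer q) := by
  classical
  obtain ⟨v, hv⟩ :=
    LinearMap.BilinForm.exists_orthogonal_basis (QuadraticForm.associated_isSymm ℝ q)
  have hv' : (QuadraticMap.associated (-q)).IsOrthoᵢ v := by
    rw [map_neg]
    exact fun i j hij => neg_eq_zero.mpr (hv hij)
  set sp := Finset.univ.filter fun i => 0 < q (v i)
  set sn := Finset.univ.filter fun i => q (v i) < 0
  set s0 := Finset.univ.filter fun i => q (v i) = 0
  have hsp : sp.card ≤ posInertia q := by
    rw [← v.finrank_span_image]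
    exact le_posInertia fun x hx hx0 =>
      pos_of_mem_span_image_of_isOrthoᵢ hv (fun i hi => (Finset.mem_filter.mp hi).2) hx hx0
  have hsn : sn.card ≤ negInertia q := by
    rw [← v.finrank_span_image]
    refine le_posInertia fun x hx hx0 =>
      pos_of_mem_span_image_of_isOrthoᵢ hv' (fun i hi => ?_) hx hx0
    simpa using (Finset.mem_filter.mp hi).2
  have hs0 : s0.card ≤ finrank ℝ (qfKer q) := by
    rw [← v.finrank_span_image]
    refine Submodule.finrank_mono (Submodule.span_le.mpr ?_)
    rintro _ ⟨i, hi, rfl⟩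
    exact mem_qfKer_of_isOrthoᵢ hv (Finset.mem_filter.mp hi).2
  have hcover : Finset.univ ⊆ sp ∪ sn ∪ s0 := fun i _ => by
    rcases lt_trichotomy (q (v i)) 0 with h | h | h <;> simp [sp, sn, s0, h]
  calc finrank ℝ V = (Finset.univ : Finset (Fin (finrank ℝ V))).card := by simp
    _ ≤ (sp ∪ sn ∪ s0).card := Finset.card_le_card hcover
    _ ≤ (sp ∪ sn).card + s0.card := Finset.card_union_le _ _
    _ ≤ sp.card + sn.card + s0.card := by grw [Finset.card_union_le]
    _ ≤ _ := by gcongr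

section Normed

variable {V : Type*} [NormedAddCommGroup V] [NormedSpace ℝ V]

theorem QuadraticMap.continuous_of_finiteDimensional [FiniteDimensional ℝ V]
    (q : QuadraticForm ℝ V) : Continuous q := by
  have hB : Continuous fun x => LinearMap.toContinuousLinearMap (associated q x) :=
    (LinearMap.toContinuousLinearMap.toLinearMap ∘ₗ associated q).continuous_of_finiteDimensional
  simpa only [LinearMap.coe_toContinuousLinearMap', id, associated_eq_self_apply] using
    hB.clm_apply continuous_id

theorem QuadraticMap.pos_of_pos_on_sphere {q : QuadraticForm ℝ V} {W : Submodule ℝ V}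
    (h : ∀ x ∈ W, ‖x‖ = 1 → 0 < q x) {x : V} (hx : x ∈ W) (hx0 : x ≠ 0) : 0 < q x := by
  have hnorm : ‖x‖ ≠ 0 := norm_ne_zero_iff.mpr hx0
  have hscale : q x = ‖x‖ ^ 2 * q (‖x‖⁻¹ • x) := by
    rw [QuadraticMap.map_smul, smul_eq_mul]
    field_simp
  rw [hscale]
  exact mul_pos (by positivity) (h _ (W.smul_mem _ hx) (by simp [norm_smul, hnorm]))

theorem QuadraticMap.eventually_pos_sub_smul [FiniteDimensional ℝ V] (p : QuadraticForm ℝ V)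
    {g : QuadraticForm ℝ V} {W : Submodule ℝ V} (hW : ∀ x ∈ W, x ≠ 0 → 0 < g x) :
    ∀ᶠ ε in 𝓝 (0 : ℝ), ∀ x ∈ W, x ≠ 0 → 0 < (g - ε • p) x := by
  have hK : IsCompact ((W : Set V) ∩ Metric.sphere 0 1) :=
    (isCompact_sphere 0 1).inter_left W.closed_of_finiteDimensional
  have hcont : Continuous fun z : ℝ × V => (g - z.1 • p) z.2 := by
    simp only [sub_apply, smul_apply, smul_eq_mul]
    have hg := g.continuous_of_finiteDimensional
    have hp := p.continuous_of_finiteDimensional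
    fun_prop
  refine (hK.eventually_forall_of_forall_eventually fun y hy => ?_).mono
    fun ε hε x hx hx0 => pos_of_pos_on_sphere (fun y hyW hy1 => hε y ⟨hyW, by simpa using hy1⟩)
      hx hx0
  refine hcont.continuousAt.eventually (lt_mem_nhds ?_)
  simpa using hW y hy.1 (ne_zero_of_mem_unit_sphere ⟨y, hy.2⟩)

end Normed

/-- For a quadratic form `g` and a positive definite form `p` on `ℝ^m`,
for all sufficiently small `ε > 0` one has `i⁻(g - εp) = i⁻(g) + dim ker g`. -/
theorem negInertia_perturbation (m : ℕ)
    (g p : QuadraticForm ℝ (EuclideanSpace ℝ (Fin m)))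
    (hp : ∀ x : EuclideanSpace ℝ (Fin m), x ≠ 0 → 0 < p x) :
    ∃ ε₀ : ℝ, 0 < ε₀ ∧ ∀ ε : ℝ, 0 < ε → ε < ε₀ →
      negInertia (g - ε • p) = negInertia g + Module.finrank ℝ ↥(qfKer g) := by
  obtain ⟨P, hPdim, hPpos⟩ := exists_finrank_eq_posInertia g
  obtain ⟨ε₀, hε₀, hstable⟩ :=
    Metric.eventually_nhds_iff.mp (QuadraticMap.eventually_pos_sub_smul p hPpos)
  refine ⟨ε₀, hε₀, fun ε hε hεlt => le_antisymm ?_ ?_⟩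
  · obtain ⟨U, hUdim, hUneg⟩ := exists_finrank_eq_negInertia (g - ε • p)
    have hPpos' := hstable (show dist ε 0 < ε₀ by rwa [Real.dist_0_eq_abs, abs_of_pos hε])
    have hdisj := finrank_add_finrank_le_of_pos_of_neg hPpos' hUneg
    have hcount := finrank_le_posInertia_add_negInertia_add_finrank_qfKer g
    omega
  · refine negInertia_add_finrank_qfKer_le_negInertia_sub g fun x hx0 => ?_
    simpa using mul_pos hε (hp x hx0)
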